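/- For every positive rational number α and every lattice point v ∈ C ∩ ℤ^d, the following are equivalent: (1) there exists w ∈ ℚ^d with F_σ(w) ≥ −1 for all σ ∈ ℱ and v − w ∈ interior(α·P_I); (2) F(v) + e ∈ interior(α·P_J). Equivalently, F(Ω_{αI} ∩ (C ∩ ℤ^d)) = (−e + interior(α·P_J)) ∩ F(C ∩ ℤ^d), where Ω_{αI} = ⋃ {w + interior(α·P_I) : w ∈ ℚ^d, F_σ(w) ≥ −1 for all σ}. (This is the combinatorial content of the toric Howald formula 𝒥(X, αI) = ⟨ y^v : F(v)+e ∈ relint(α P_J) ⟩ for an arbitrary normal toric variety.) -/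
import Mathlib

open Pointwise

/-- The real vector in `ℝ^d` obtained from an integer lattice point. -/
def castR {d : ℕ} (v : Fin d → ℤ) : Fin d → ℝ := fun i => (v i : ℝ)

/-- The cone `C = {p ∈ ℝ^d : F_σ(p) ≥ 0 for all σ ∈ ℱ}`. -/
def coneC {d : ℕ} {ℱ : Type} (Fσ : ℱ → ((Fin d → ℝ) →ₗ[ℝ] ℝ)) : Set (Fin d → ℝ) :=
  {p | ∀ σ, 0 ≤ Fσ σ p}

/-- The linear map `F : ℝ^d → ℝ^ℱ`, `F(p) = (F_σ(p))_σ`. -/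
noncomputable def Fmap {d : ℕ} {ℱ : Type} (Fσ : ℱ → ((Fin d → ℝ) →ₗ[ℝ] ℝ)) :
    (Fin d → ℝ) →ₗ[ℝ] (ℱ → ℝ) :=
  LinearMap.pi Fσ

/-- The nonnegative orthant `ℝ_{≥0}^ℱ`. -/
def orthant (ℱ : Type) : Set (ℱ → ℝ) := {x | ∀ σ, 0 ≤ x σ}

/-- The Newton polyhedron `P_I = conv(⋃ᵢ (βᵢ + C)) ⊆ ℝ^d`. -/
noncomputable def newtonPI {d r : ℕ} {ℱ : Type} (Fσ : ℱ → ((Fin d → ℝ) →ₗ[ℝ] ℝ))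
    (β : Fin r → (Fin d → ℤ)) : Set (Fin d → ℝ) :=
  convexHull ℝ (⋃ i, castR (β i) +ᵥ coneC Fσ)

/-- The Newton polyhedron `P_{F(I)} = conv(⋃ᵢ (F(βᵢ) + F(C))) ⊆ ℝ^ℱ`. -/
noncomputable def newtonPFI {d r : ℕ} {ℱ : Type} (Fσ : ℱ → ((Fin d → ℝ) →ₗ[ℝ] ℝ))
    (β : Fin r → (Fin d → ℤ)) : Set (ℱ → ℝ) :=
  convexHull ℝ (⋃ i, Fmap Fσ (castR (β i)) +ᵥ (Fmap Fσ '' coneC Fσ))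

/-- The Newton polyhedron `P_J = conv(⋃ᵢ (F(βᵢ) + ℝ_{≥0}^ℱ)) ⊆ ℝ^ℱ`. -/
noncomputable def newtonPJ {d r : ℕ} {ℱ : Type} (Fσ : ℱ → ((Fin d → ℝ) →ₗ[ℝ] ℝ))
    (β : Fin r → (Fin d → ℤ)) : Set (ℱ → ℝ) :=
  convexHull ℝ (⋃ i, Fmap Fσ (castR (β i)) +ᵥ orthant ℱ)

/-- A vector of `ℝ^d` with all coordinates rational (`w ∈ ℚ^d`). -/
def isRatVec {d : ℕ} (w : Fin d → ℝ) : Prop := ∀ i, ∃ q : ℚ, w i = (q : ℝ)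

section Aux
variable {E : Type*} [NormedAddCommGroup E] [NormedSpace ℝ E]

/-- decomposition of conv of union of translates of a convex set -/
lemma hull_iUnion_vadd {r : ℕ} (c : Fin r → E) {K : Set E} (hK : Convex ℝ K) :
    convexHull ℝ (⋃ i, c i +ᵥ K) = convexHull ℝ (Set.range c) + K := by
  have h1 : (⋃ i, c i +ᵥ K) = Set.range c + K := by
    ext x
    simp only [Set.mem_iUnion, Set.mem_vadd_set, Set.mem_add, Set.mem_range]
    constructor
    · rintro ⟨i, y, hy, rfl⟩; exact ⟨c i, ⟨i, rfl⟩, y, hy, rfl⟩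
    · rintro ⟨a, ⟨i, rfl⟩, y, hy, rfl⟩; exact ⟨i, y, hy, rfl⟩
  rw [h1, convexHull_add, hK.convexHull_eq]

/-- interior slack in any direction -/
lemma exists_sub_smul_mem {T : Set E} {x : E} (hx : x ∈ interior T) (q : E) :
    ∃ ε : ℝ, 0 < ε ∧ x - ε • q ∈ T := by
  rcases Metric.mem_nhds_iff.1 (mem_interior_iff_mem_nhds.1 hx) with ⟨ρ, hρ, hball⟩
  refine ⟨ρ / (2 * (‖q‖ + 1)), by positivity, ?_⟩
  apply hball
  rw [Metric.mem_ball, dist_eq_norm]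
  rw [sub_sub_cancel_left, norm_neg, norm_smul, Real.norm_eq_abs, abs_of_pos (by positivity)]
  have hq : ‖q‖ < ‖q‖ + 1 := by linarith
  calc ρ / (2 * (‖q‖ + 1)) * ‖q‖ < ρ / (2 * (‖q‖ + 1)) * (‖q‖ + 1) := by
        apply mul_lt_mul_of_pos_left hq; positivity
    _ = ρ / 2 := by field_simp
    _ < ρ := by linarith

set_option linter.unusedSectionVars false in
/-- translate of interior of a "stable direction" set lands in the interior -/
lemma add_interior_mem_interior {T K : Set E} (hTK : ∀ t ∈ T, ∀ k ∈ K, t + k ∈ T)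
    {b p : E} (hb : b ∈ T) (hp : p ∈ interior K) : b + p ∈ interior T := by
  rw [mem_interior]
  refine ⟨(b + ·) '' interior K, ?_, (isOpenMap_add_left b) _ isOpen_interior, ⟨p, hp, rfl⟩⟩
  rintro x ⟨y, hy, rfl⟩
  exact hTK b hb y (interior_subset hy)

end Aux

section Aux2
variable {ℱ : Type} [Fintype ℱ] [Nonempty ℱ]

/-- strict positive translate lands in interior of orthant-saturated set -/
lemma mem_interior_of_orthant {S : Set (ℱ → ℝ)}
    (hS : ∀ s ∈ S, ∀ z : ℱ → ℝ, (∀ σ, 0 ≤ z σ) → s + z ∈ S)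
    {s z : ℱ → ℝ} (hs : s ∈ S) (hz : ∀ σ, 0 < z σ) : s + z ∈ interior S := by
  set ε := Finset.univ.inf' Finset.univ_nonempty z with hε
  have hε0 : 0 < ε := by
    rw [hε, Finset.lt_inf'_iff]
    exact fun σ _ => hz σ
  rw [mem_interior]
  refine ⟨Metric.ball (s + z) ε, ?_, Metric.isOpen_ball, Metric.mem_ball_self hε0⟩
  intro u hu
  rw [Metric.mem_ball] at hu
  have : u = s + (u - s) := by ring_nf
  rw [this]
  apply hS s hs
  intro σ
  have h1 : dist (u σ) ((s + z) σ) < ε := lt_of_le_of_lt (dist_le_pi_dist u (s+z) σ) hu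
  have h2 : ε ≤ z σ := Finset.inf'_le _ (Finset.mem_univ σ)
  rw [Real.dist_eq] at h1
  have := abs_lt.1 h1
  simp only [Pi.add_apply] at this
  have : -(z σ) < u σ - s σ - z σ := by
    calc -(z σ) ≤ -ε := by linarith
    _ < u σ - (s σ + z σ) := by linarith [this.1]
    _ = u σ - s σ - z σ := by ring
  simp only [Pi.sub_apply]
  linarith

set_option linter.unusedSectionVars false in
/-- interior membership gives uniform slack in the all-ones direction -/
lemma exists_sub_ones_mem {S : Set (ℱ → ℝ)} {y : ℱ → ℝ} (hy : y ∈ interior S) :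
    ∃ δ : ℝ, 0 < δ ∧ y - δ • (fun _ => (1:ℝ) : ℱ → ℝ) ∈ S := by
  obtain ⟨δ, hδ, h⟩ := exists_sub_smul_mem (E := ℱ → ℝ) hy (fun _ => (1:ℝ))
  exact ⟨δ, hδ, h⟩

end Aux2

section Setup
variable {d : ℕ} {ℱ : Type} [Fintype ℱ] [Nonempty ℱ]

lemma coneC_convex (Fσ : ℱ → ((Fin d → ℝ) →ₗ[ℝ] ℝ)) : Convex ℝ (coneC Fσ) := by
  intro x hx y hy a b ha hb hab σ
  simp only [map_add, map_smul, smul_eq_mul]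
  exact add_nonneg (mul_nonneg ha (hx σ)) (mul_nonneg hb (hy σ))

lemma orthant_convex : Convex ℝ (orthant ℱ) := by
  intro x hx y hy a b ha hb hab σ
  exact add_nonneg (mul_nonneg ha (hx σ)) (mul_nonneg hb (hy σ))

lemma coneC_add (Fσ : ℱ → ((Fin d → ℝ) →ₗ[ℝ] ℝ)) {x y : Fin d → ℝ}
    (hx : x ∈ coneC Fσ) (hy : y ∈ coneC Fσ) : x + y ∈ coneC Fσ := fun σ => by
  rw [map_add]; exact add_nonneg (hx σ) (hy σ)

lemma coneC_zero (Fσ : ℱ → ((Fin d → ℝ) →ₗ[ℝ] ℝ)) : (0 : Fin d → ℝ) ∈ coneC Fσ :=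
  fun σ => by rw [map_zero]

lemma smul_coneC (Fσ : ℱ → ((Fin d → ℝ) →ₗ[ℝ] ℝ)) {a : ℝ} (ha : 0 < a) :
    a • coneC Fσ = coneC Fσ := by
  ext x
  rw [Set.mem_smul_set_iff_inv_smul_mem₀ (ne_of_gt ha)]
  constructor
  · intro h σ
    have := h σ
    rw [map_smul, smul_eq_mul] at this
    nlinarith [inv_pos.2 ha]
  · intro h σ
    rw [map_smul, smul_eq_mul]
    exact mul_nonneg (inv_pos.2 ha).le (h σ)

lemma smul_orthant {a : ℝ} (ha : 0 < a) : a • orthant ℱ = orthant ℱ := by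
  ext x
  rw [Set.mem_smul_set_iff_inv_smul_mem₀ (ne_of_gt ha)]
  constructor
  · intro h σ
    have := h σ
    simp only [Pi.smul_apply, smul_eq_mul] at this
    nlinarith [inv_pos.2 ha]
  · intro h σ
    simp only [Pi.smul_apply, smul_eq_mul]
    exact mul_nonneg (inv_pos.2 ha).le (h σ)

lemma image_smul_linear {E F : Type*} [NormedAddCommGroup E] [NormedSpace ℝ E]
    [NormedAddCommGroup F] [NormedSpace ℝ F] (f : E →ₗ[ℝ] F) (a : ℝ) (s : Set E) :
    f '' (a • s) = a • (f '' s) := by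
  ext y
  constructor
  · rintro ⟨x, ⟨u, hu, rfl⟩, rfl⟩
    exact ⟨f u, ⟨u, hu, rfl⟩, (map_smul f a u).symm⟩
  · rintro ⟨z, ⟨u, hu, rfl⟩, rfl⟩
    exact ⟨a • u, ⟨u, hu, rfl⟩, map_smul f a u⟩

end Setup

/-- for every positive rational `α` and lattice point `v ∈ C ∩ ℤ^d`, there is
`w ∈ ℚ^d` with `F_σ(w) ≥ -1` for all `σ` and `v - w ∈ interior(α P_I)` iff
`F(v) + e ∈ interior(α P_J)`; equivalently
`F(Ω_{αI} ∩ (C ∩ ℤ^d)) = (-e + interior(α P_J)) ∩ F(C ∩ ℤ^d)`. -/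
theorem stmt10 (d : ℕ) (hd : 1 ≤ d) (ℱ : Type) [Fintype ℱ] [Nonempty ℱ]
    (Fσ : ℱ → ((Fin d → ℝ) →ₗ[ℝ] ℝ))
    (hFint : ∀ σ (v : Fin d → ℤ), ∃ z : ℤ, Fσ σ (castR v) = z)
    (hFsurj : ∀ σ (z : ℤ), ∃ v : Fin d → ℤ, Fσ σ (castR v) = z)
    (hFinj : Function.Injective (Fmap Fσ))
    (hfull : (interior (coneC Fσ)).Nonempty)
    (r : ℕ) (hr : 1 ≤ r) (β : Fin r → (Fin d → ℤ))
    (hβ : ∀ i, castR (β i) ∈ coneC Fσ)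
    (α : ℚ) (hα : 0 < α) :
    (∀ v : Fin d → ℤ, castR v ∈ coneC Fσ →
      ((∃ w : Fin d → ℝ, isRatVec w ∧ (∀ σ, -1 ≤ Fσ σ w) ∧
          castR v - w ∈ interior ((α : ℝ) • newtonPI Fσ β)) ↔
        Fmap Fσ (castR v) + (fun _ => 1) ∈ interior ((α : ℝ) • newtonPJ Fσ β))) ∧
    Fmap Fσ ''
        ({x | ∃ w : Fin d → ℝ, isRatVec w ∧ (∀ σ, -1 ≤ Fσ σ w) ∧
            x - w ∈ interior ((α : ℝ) • newtonPI Fσ β)} ∩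
          {x | x ∈ coneC Fσ ∧ ∃ v : Fin d → ℤ, x = castR v}) =
      {y : ℱ → ℝ | y + (fun _ => 1) ∈ interior ((α : ℝ) • newtonPJ Fσ β)} ∩
        (Fmap Fσ '' {x | x ∈ coneC Fσ ∧ ∃ v : Fin d → ℤ, x = castR v}) := by
  have hαR : (0:ℝ) < (α:ℝ) := by exact_mod_cast hα
  set A : Set (Fin d → ℝ) :=
    (α:ℝ) • convexHull ℝ (Set.range (fun i => castR (β i))) with hAdef
  -- decomposition of the scaled Newton polyhedra
  have hT : (α:ℝ) • newtonPI Fσ β = A + coneC Fσ := by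
    rw [newtonPI, hull_iUnion_vadd _ (coneC_convex Fσ), smul_add, smul_coneC Fσ hαR]
  have hQ : (α:ℝ) • newtonPJ Fσ β = (Fmap Fσ '' A) + orthant ℱ := by
    rw [newtonPJ]
    have h1 : (Set.range fun i => Fmap Fσ (castR (β i)))
        = Fmap Fσ '' Set.range (fun i => castR (β i)) := by
      rw [← Set.range_comp]; rfl
    rw [hull_iUnion_vadd _ orthant_convex, h1, ← (Fmap Fσ).image_convexHull, smul_add,
      smul_orthant hαR, hAdef, image_smul_linear]
  -- saturation properties
  have hTsat : ∀ t ∈ A + coneC Fσ, ∀ c ∈ coneC Fσ, t + c ∈ A + coneC Fσ := by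
    rintro t ⟨a, ha, k, hk, rfl⟩ c hc
    exact ⟨a, ha, k + c, coneC_add Fσ hk hc, (add_assoc a k c).symm⟩
  have hQsat : ∀ s ∈ (Fmap Fσ '' A) + orthant ℱ, ∀ z : ℱ → ℝ, (∀ σ, 0 ≤ z σ) →
      s + z ∈ (Fmap Fσ '' A) + orthant ℱ := by
    rintro s ⟨a, ha, k, hk, rfl⟩ z hz
    exact ⟨a, ha, k + z, fun σ => add_nonneg (hk σ) (hz σ), (add_assoc a k z).symm⟩
  -- interior point of the cone with strictly positive functionals
  obtain ⟨p, hp⟩ := hfull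
  have hppos : ∀ σ, 0 < Fσ σ p := by
    intro σ
    obtain ⟨u, hu⟩ := hFsurj σ 1
    obtain ⟨ε, hε, hmem⟩ := exists_sub_smul_mem hp (castR u)
    have h0 := hmem σ
    rw [map_sub, map_smul, smul_eq_mul, hu] at h0
    push_cast at h0
    linarith
  -- main equivalence
  have key : ∀ v : Fin d → ℤ, castR v ∈ coneC Fσ →
      ((∃ w : Fin d → ℝ, isRatVec w ∧ (∀ σ, -1 ≤ Fσ σ w) ∧
          castR v - w ∈ interior ((α : ℝ) • newtonPI Fσ β)) ↔
        Fmap Fσ (castR v) + (fun _ => 1) ∈ interior ((α : ℝ) • newtonPJ Fσ β)) := by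
    intro v hv
    constructor
    · rintro ⟨w, hwrat, hwge, hvw⟩
      obtain ⟨ε, hε, hsl⟩ := exists_sub_smul_mem hvw p
      rw [hT] at hsl
      obtain ⟨a, ha, c, hc, hac⟩ := hsl
      have hsplit : Fmap Fσ (castR v) + (fun _ => 1)
          = Fmap Fσ a + (fun σ => Fσ σ c + Fσ σ w + ε * Fσ σ p + 1) := by
        funext σ
        have := congrArg (Fσ σ) hac
        rw [map_add, map_sub, map_sub, map_smul, smul_eq_mul] at this
        simp only [Pi.add_apply, Fmap, LinearMap.pi_apply]
        linarith
      rw [hsplit, hQ]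
      apply mem_interior_of_orthant hQsat
      · exact ⟨Fmap Fσ a, ⟨a, ha, rfl⟩, 0, fun σ => le_refl 0, add_zero _⟩
      · intro σ
        have := hc σ
        have := hwge σ
        have := hppos σ
        nlinarith
    · intro hy
      rw [hQ] at hy
      obtain ⟨δ, hδ, hmem⟩ := exists_sub_ones_mem hy
      obtain ⟨fb, ⟨b, hb, rfl⟩, z, hz, hzeq⟩ := hmem
      have hvb : ∀ σ, δ - 1 ≤ Fσ σ (castR v) - Fσ σ b := by
        intro σ
        have := congrFun hzeq σ
        simp only [Pi.add_apply, Pi.sub_apply, Pi.smul_apply, smul_eq_mul, mul_one,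
          Fmap, LinearMap.pi_apply] at this
        have hzσ := hz σ
        linarith
      set M := Finset.univ.sup' Finset.univ_nonempty (fun σ => Fσ σ p) with hM
      have hMpos : 0 < M :=
        lt_of_lt_of_le (hppos (Classical.arbitrary ℱ))
          (Finset.le_sup' (fun σ => Fσ σ p) (Finset.mem_univ (Classical.arbitrary ℱ)))
      set ε := δ / (2 * M) with hεdef
      have hε : 0 < ε := by positivity
      have hbound : ∀ σ, ε * Fσ σ p ≤ δ / 2 := by
        intro σ
        have h1 : Fσ σ p ≤ M := Finset.le_sup' (fun σ => Fσ σ p) (Finset.mem_univ σ)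
        calc ε * Fσ σ p ≤ ε * M := mul_le_mul_of_nonneg_left h1 hε.le
          _ = δ / 2 := by rw [hεdef]; field_simp
      set w₀ := castR v - b - ε • p with hw₀def
      have hw₀ : ∀ σ, -1 + δ/2 ≤ Fσ σ w₀ := by
        intro σ
        rw [hw₀def, map_sub, map_sub, map_smul, smul_eq_mul]
        have := hvb σ
        have := hbound σ
        linarith
      have hvw₀ : castR v - w₀ ∈ interior ((α : ℝ) • newtonPI Fσ β) := by
        have heq : castR v - w₀ = b + ε • p := by
          rw [hw₀def]; abel
        rw [heq, hT]
        apply add_interior_mem_interior hTsat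
        · exact ⟨b, hb, 0, coneC_zero Fσ, add_zero b⟩
        · have h1 : ε • p ∈ ε • interior (coneC Fσ) := ⟨p, hp, rfl⟩
          rwa [← interior_smul₀ (ne_of_gt hε), smul_coneC Fσ hε] at h1
      -- perturb to a rational vector
      set U := {w : Fin d → ℝ | ∀ σ, -1 < Fσ σ w} ∩
        {w : Fin d → ℝ | castR v - w ∈ interior ((α : ℝ) • newtonPI Fσ β)} with hUdef
      have hUopen : IsOpen U := by
        apply IsOpen.inter
        · have h1 : {w : Fin d → ℝ | ∀ σ, -1 < Fσ σ w}
              = ⋂ σ, (Fσ σ) ⁻¹' Set.Ioi (-1) := by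
            ext w; simp [Set.mem_iInter]
          rw [h1]
          exact isOpen_iInter_of_finite fun σ =>
            (isOpen_Ioi).preimage (Fσ σ).continuous_of_finiteDimensional
        · exact isOpen_interior.preimage (continuous_const.sub continuous_id)
      have hw₀U : w₀ ∈ U := ⟨fun σ => by have := hw₀ σ; linarith, hvw₀⟩
      obtain ⟨η, hη, hball⟩ := Metric.isOpen_iff.1 hUopen w₀ hw₀U
      choose q hq using fun i => exists_rat_near (w₀ i) (half_pos hη)
      have hmemU : (fun i => (q i : ℝ)) ∈ U := by
        apply hball
        rw [Metric.mem_ball, dist_pi_lt_iff hη]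
        intro i
        rw [Real.dist_eq, abs_sub_comm]
        exact lt_of_lt_of_le (hq i) (half_le_self hη.le)
      exact ⟨fun i => (q i : ℝ), fun i => ⟨q i, rfl⟩, fun σ => (hmemU.1 σ).le, hmemU.2⟩
  refine ⟨key, ?_⟩
  ext y
  constructor
  · rintro ⟨x, ⟨hxΩ, hxC, v, rfl⟩, rfl⟩
    exact ⟨(key v hxC).1 hxΩ, castR v, ⟨hxC, v, rfl⟩, rfl⟩
  · rintro ⟨hy1, x, ⟨hxC, v, rfl⟩, rfl⟩
    exact ⟨castR v, ⟨(key v hxC).2 hy1, hxC, v, rfl⟩, rfl⟩
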